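/- arXiv:1710.08481 — 5 statements merged into one kernel-verified Lean document; each statement's English description precedes it below -/
import Mathlib

section
/- Let X be a module over a commutative ring with invertible elements s, t, a, b satisfying s + t = a + b, with biquandle operations x▷̲y = tx+(s−t)y, x▷̄y = sx and singular operations x•̲y = ax+(s−a)y, x•̄y = bx+(s−b)y. Then for all x, y ∈ X, the elements w = b⁻¹(b−s)x + b⁻¹sy and z = b⁻¹tx + b⁻¹(s−a)y satisfy: x▷̲y = z•̄y, y▷̄x = w•̄x, w▷̲z = y•̲z, and z▷̄w = x•̲w. -/
/-- For the Alexander psyquandle operations, the explicit elements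
`w = b⁻¹(b−s)x + b⁻¹sy` and `z = b⁻¹tx + b⁻¹(s−a)y` satisfy the four
(p/sii) equations. -/
theorem alexander_psii_solutions (R X : Type*) [CommRing R] [AddCommGroup X]
    [Module R X] (s t a b : Rˣ) (h : (s : R) + t = a + b) (x y : X) :
    ∀ w z : X,
      w = ((b⁻¹ : Rˣ) * ((b : R) - s) : R) • x + ((b⁻¹ : Rˣ) * s : R) • y →
      z = ((b⁻¹ : Rˣ) * t : R) • x + ((b⁻¹ : Rˣ) * ((s : R) - a) : R) • y →
      ((t : R) • x + ((s : R) - t) • y = (b : R) • z + ((s : R) - b) • y) ∧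
      ((s : R) • y = (b : R) • w + ((s : R) - b) • x) ∧
      ((t : R) • w + ((s : R) - t) • z = (a : R) • y + ((s : R) - a) • z) ∧
      ((s : R) • z = (a : R) • x + ((s : R) - a) • w) := by
  intro w z hw hz
  subst hw hz
  have hb : ((b⁻¹ : Rˣ) : R) * (b : R) = 1 := b.inv_mul
  refine ⟨?_, ?_, ?_, ?_⟩
  · match_scalars
    · linear_combination (-(t : R)) * hb
    · linear_combination ((a : R) - s) * hb - h
  · match_scalars
    · linear_combination (-(s : R)) * hb
    · linear_combination ((s : R) - b) * hb
  · match_scalars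
    · linear_combination (-(t : R) * ((b⁻¹ : Rˣ) : R)) * h
    · linear_combination (a : R) * ((b⁻¹ : Rˣ) : R) * h + (a : R) * hb
  · match_scalars
    · linear_combination (s : R) * ((b⁻¹ : Rˣ) : R) * h + (a : R) * hb
    · ring
end

section
/- Let X be a module over a commutative ring with invertible elements s, t, a, b satisfying s + t = a + b, with biquandle operations x▷̲y = tx+(s−t)y, x▷̄y = sx and singular operations x•̲y = ax+(s−a)y, x•̄y = bx+(s−b)y. Then the mixed exchange law (x▷̲y)▷̲(z•̄y) = (x▷̲z)▷̲(y•̲z) holds for all x, y, z ∈ X. -/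
/-- `x ▷̲ y = t•x + (s−t)•y`. -/
def underOp {R X : Type*} [CommRing R] [AddCommGroup X] [Module R X]
    (s t : R) (x y : X) : X := t • x + (s - t) • y

/-- `x •̲ y = a•x + (s−a)•y`. -/
def ubul {R X : Type*} [CommRing R] [AddCommGroup X] [Module R X]
    (s a : R) (x y : X) : X := a • x + (s - a) • y

/-- `x •̄ y = b•x + (s−b)•y`. -/
def obul {R X : Type*} [CommRing R] [AddCommGroup X] [Module R X]
    (s b : R) (x y : X) : X := b • x + (s - b) • y

/-- The mixed exchange law `(x▷̲y)▷̲(z•̄y) = (x▷̲z)▷̲(y•̲z)` for the Alexander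
psyquandle operations. -/
theorem mixed_exchange_under (R X : Type*) [CommRing R] [AddCommGroup X]
    [Module R X] (s t a b : Rˣ) (h : (s : R) + t = a + b) :
    ∀ x y z : X,
      underOp (s : R) (t : R) (underOp (s : R) (t : R) x y)
          (obul (s : R) (b : R) z y) =
        underOp (s : R) (t : R) (underOp (s : R) (t : R) x z)
          (ubul (s : R) (a : R) y z) := by
  intro x y z
  simp only [underOp, ubul, obul, smul_add, smul_smul]
  have ha : (a : R) = s + t - b := by linear_combination -h
  rw [ha]
  module
end

section
/- Let X be a module over a commutative ring with invertible elements s, t, a, b satisfying s + t = a + b, with operations x▷̲y = tx+(s−t)y, x▷̄y = sx, x•̲y = ax+(s−a)y, x•̄y = bx+(s−b)y. Then all six mixed exchange laws hold: (x▷̄y)▷̄(z•̄y) = (x▷̄z)▷̄(y•̲z); (x▷̲y)▷̲(z•̄y) = (x▷̲z)▷̲(y•̲z); (x▷̄y)•̄(z▷̄y) = (x•̄z)▷̄(y▷̲z); (x▷̲y)•̲(z▷̲y) = (x•̲z)▷̲(y▷̄z); (x▷̄y)•̲(z▷̄y) = (x•̲z)▷̄(y▷̲z); (x▷̲y)•̄(z▷̲y)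 = (x•̄z)▷̲(y▷̄z). -/
/-- `x ▷̄ y = s•x`. -/
def overOp {R X : Type*} [CommRing R] [AddCommGroup X] [Module R X]
    (s _t : R) (x _y : X) : X := s • x

/-- All six mixed exchange laws hold for the Alexander psyquandle operations. -/
theorem alexander_mixed_exchange_laws (R X : Type*) [CommRing R]
    [AddCommGroup X] [Module R X] (s t a b : Rˣ) (h : (s : R) + t = a + b) :
    (∀ x y z : X,
      overOp (s:R) (t:R) (overOp (s:R) (t:R) x y) (obul (s:R) (b:R) z y) =
        overOp (s:R) (t:R) (overOp (s:R) (t:R) x z) (ubul (s:R) (a:R) y z)) ∧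
    (∀ x y z : X,
      underOp (s:R) (t:R) (underOp (s:R) (t:R) x y) (obul (s:R) (b:R) z y) =
        underOp (s:R) (t:R) (underOp (s:R) (t:R) x z) (ubul (s:R) (a:R) y z)) ∧
    (∀ x y z : X,
      obul (s:R) (b:R) (overOp (s:R) (t:R) x y) (overOp (s:R) (t:R) z y) =
        overOp (s:R) (t:R) (obul (s:R) (b:R) x z) (underOp (s:R) (t:R) y z)) ∧
    (∀ x y z : X,
      ubul (s:R) (a:R) (underOp (s:R) (t:R) x y) (underOp (s:R) (t:R) z y) =
        underOp (s:R) (t:R) (ubul (s:R) (a:R) x z) (overOp (s:R) (t:R) y z)) ∧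
    (∀ x y z : X,
      ubul (s:R) (a:R) (overOp (s:R) (t:R) x y) (overOp (s:R) (t:R) z y) =
        overOp (s:R) (t:R) (ubul (s:R) (a:R) x z) (underOp (s:R) (t:R) y z)) ∧
    (∀ x y z : X,
      obul (s:R) (b:R) (underOp (s:R) (t:R) x y) (underOp (s:R) (t:R) z y) =
        underOp (s:R) (t:R) (obul (s:R) (b:R) x z) (overOp (s:R) (t:R) y z)) := by
  have hb : (b:R) = s + t - a := by linear_combination -h
  refine ⟨?_, ?_, ?_, ?_, ?_, ?_⟩ <;> intro x y z <;>
    simp only [underOp, overOp, ubul, obul, hb, smul_add, smul_smul] <;> module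
end

section
/- Let X be a set and σ, τ : X → X bijections satisfying στ = τσ and σ⁻¹τ = τ⁻¹σ. Then the operations x▷̲y = x▷̄y = τ(x) and x•̲y = x•̄y = σ(x) satisfy the psyquandle axiom (p/sii): for all x, y ∈ X there exist unique w, z ∈ X (namely z = τ⁻¹σ(x), w = τ⁻¹σ(y)) such that x▷̲y = z•̄y, y▷̄x = w•̄x, w▷̲z = y•̲z, and z▷̄w = x•̲w. -/
/-- For the constant action psyquandle (`x▷̲y = x▷̄y = τ(x)`,
`x•̲y = x•̄y = σ(x)`) with `στ = τσ` and `σ⁻¹τ = τ⁻¹σ`, axiom (p/sii) holds: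
for all `x, y` there exists a unique pair `(w, z)` satisfying the four
crossing equations, and this pair is `(τ⁻¹σ(y), τ⁻¹σ(x))`. -/
theorem constant_action_psii (X : Type*) (σ τ : Equiv.Perm X)
    (h1 : σ * τ = τ * σ) (h2 : σ⁻¹ * τ = τ⁻¹ * σ) :
    ∀ x y : X,
      (∃! wz : X × X,
        τ x = σ wz.2 ∧ τ y = σ wz.1 ∧ τ wz.1 = σ y ∧ τ wz.2 = σ x) ∧
      (τ x = σ (τ⁻¹ (σ x)) ∧ τ y = σ (τ⁻¹ (σ y)) ∧
        τ (τ⁻¹ (σ y)) = σ y ∧ τ (τ⁻¹ (σ x)) = σ x) := by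
  intro x y
  have key : ∀ a : X, σ (τ⁻¹ (σ a)) = τ a := by
    intro a
    have := congrArg (fun f : Equiv.Perm X => f a) h2
    simp only [Equiv.Perm.mul_apply] at this
    have := congrArg σ this
    simpa using this.symm
  constructor
  · refine ⟨(τ⁻¹ (σ y), τ⁻¹ (σ x)), ⟨(key x).symm, (key y).symm, by simp, by simp⟩, ?_⟩
    rintro ⟨w, z⟩ ⟨hz, hw, -, -⟩
    simp only [Prod.mk.injEq]
    constructor
    · have : w = σ⁻¹ (τ y) := by simpa using (congrArg (⇑σ⁻¹) hw).symm
      rw [this]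
      have := congrArg (fun f : Equiv.Perm X => f y) h2
      simpa [Equiv.Perm.mul_apply] using this
    · have : z = σ⁻¹ (τ x) := by simpa using (congrArg (⇑σ⁻¹) hz).symm
      rw [this]
      have := congrArg (fun f : Equiv.Perm X => f x) h2
      simpa [Equiv.Perm.mul_apply] using this
  · exact ⟨(key x).symm, (key y).symm, by simp, by simp⟩
end

section
/- In the ring R = ℤ[1/2][s^{±1}, t^{±1}, (s+t)^{−1}] (the localization of ℤ[s,t] at 2, s, t, and s+t), every unit has the form ±2^i s^j t^k (s+t)^l for integers i, j, k, l. -/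
open MvPolynomial

/-- The polynomial ring ℤ[s,t]. -/
abbrev PolyST : Type := MvPolynomial (Fin 2) ℤ

/-- The multiplicative set generated by `2, s, t, s+t` in ℤ[s,t]. -/
noncomputable def Mst : Submonoid PolyST :=
  Submonoid.closure {2, X 0, X 1, X 0 + X 1}

/-- The ring `Λ_J = ℤ[1/2, s^{±1}, t^{±1}, (s+t)^{−1}]`. -/
abbrev LambdaJ : Type := Localization Mst

/-! The elements `2, s, t, s + t` are prime in the domain `ℤ[s,t]`, whose only units are `±1`.
If `u = a / m` is a unit of the localization, then `a` divides an element of the multiplicative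
set, and a divisor of a product of primes is a unit times a subproduct of them; hence
`a = ±2^i s^j t^k (s+t)^l`. -/

theorem Submonoid.exists_unit_mul_of_dvd_mem_closure {α : Type*} [CommMonoidWithZero α]
    [IsCancelMulZero α] {T : Set α} (hT : ∀ p ∈ T, Prime p) {a m : α}
    (hm : m ∈ Submonoid.closure T) (ha : a ∣ m) :
    ∃ v : αˣ, ∃ s ∈ Submonoid.closure T, a = v * s := by
  induction hm using Submonoid.closure_induction_left generalizing a with
  | one => exact ⟨(isUnit_of_dvd_one ha).unit, 1, one_mem _, by simp⟩
  | mul_left p hp y _ ih =>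
    rcases (hT p hp).left_dvd_or_dvd_right_of_dvd_mul ha with ⟨c, rfl⟩ | hay
    · obtain ⟨v, s, hs, rfl⟩ := ih ((mul_dvd_mul_iff_left (hT p hp).ne_zero).mp ha)
      exact ⟨v, p * s, mul_mem (Submonoid.subset_closure hp) hs, mul_left_comm _ _ _⟩
    · exact ih hay

theorem IsLocalization.exists_unit_mul_eq_of_closure_primes {R S : Type*} [CommRing R]
    [IsDomain R] [CommRing S] [Algebra R S] {T : Set R} (hT : ∀ p ∈ T, Prime p)
    [IsLocalization (Submonoid.closure T) S] (u : Sˣ) :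
    ∃ v : Rˣ, ∃ s ∈ Submonoid.closure T, ∃ m ∈ Submonoid.closure T,
      (u : S) * algebraMap R S m = algebraMap R S (v * s) := by
  obtain ⟨⟨a, m⟩, hu⟩ := IsLocalization.surj (Submonoid.closure T) (u : S)
  have ha : IsUnit (algebraMap R S a) := hu ▸ u.isUnit.mul (IsLocalization.map_units S m)
  obtain ⟨m', hm', ham'⟩ := (IsLocalization.algebraMap_isUnit_iff (Submonoid.closure T)).mp ha
  obtain ⟨v, s, hs, rfl⟩ := Submonoid.exists_unit_mul_of_dvd_mem_closure hT hm' ham'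
  exact ⟨v, s, hs, m, m.2, hu⟩

theorem Submonoid.exists_pow_mul_of_mem_closure_four {M : Type*} [CommMonoid M] {a b c d x : M}
    (hx : x ∈ Submonoid.closure {a, b, c, d}) :
    ∃ i j k l : ℕ, x = a ^ i * b ^ j * c ^ k * d ^ l := by
  induction hx using Submonoid.closure_induction with
  | mem x hx =>
    rcases hx with rfl | rfl | rfl | rfl
    · exact ⟨1, 0, 0, 0, by simp⟩
    · exact ⟨0, 1, 0, 0, by simp⟩
    · exact ⟨0, 0, 1, 0, by simp⟩
    · exact ⟨0, 0, 0, 1, by simp⟩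
  | one => exact ⟨0, 0, 0, 0, by simp⟩
  | mul x y _ _ hx hy =>
    obtain ⟨i, j, k, l, rfl⟩ := hx
    obtain ⟨i', j', k', l', rfl⟩ := hy
    exact ⟨i + i', j + j', k + k', l + l', by simp only [pow_add]; ac_rfl⟩

theorem zpow_sub_mul_zpow_sub_mul_zpow_sub_mul_zpow_sub {G : Type*} [CommGroup G]
    (a b c d : G) (i j k l i' j' k' l' : ℤ) :
    a ^ (i - i') * b ^ (j - j') * c ^ (k - k') * d ^ (l - l') =
      a ^ i * b ^ j * c ^ k * d ^ l / (a ^ i' * b ^ j' * c ^ k' * d ^ l') := by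
  simp only [zpow_sub, ← div_eq_mul_inv, div_mul_div_comm]

theorem IsUnit.val_unit_zpow_natCast_mul {R S : Type*} [CommRing R] [CommRing S] (f : R →+* S)
    {a b c d : R} (ha : IsUnit (f a)) (hb : IsUnit (f b)) (hc : IsUnit (f c))
    (hd : IsUnit (f d)) (i j k l : ℕ) :
    ((ha.unit ^ (i : ℤ) * hb.unit ^ (j : ℤ) * hc.unit ^ (k : ℤ) * hd.unit ^ (l : ℤ) : Sˣ) : S) =
      f (a ^ i * b ^ j * c ^ k * d ^ l) := by
  simp

theorem IsUnit.eq_unit_zpow_sub_mul {R S : Type*} [CommRing R] [CommRing S] (f : R →+* S)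
    {a b c d : R} (ha : IsUnit (f a)) (hb : IsUnit (f b)) (hc : IsUnit (f c))
    (hd : IsUnit (f d)) {u : Sˣ} {i j k l i' j' k' l' : ℕ}
    (hu : (u : S) * f (a ^ i' * b ^ j' * c ^ k' * d ^ l') = f (a ^ i * b ^ j * c ^ k * d ^ l)) :
    u = ha.unit ^ ((i : ℤ) - i') * hb.unit ^ ((j : ℤ) - j') * hc.unit ^ ((k : ℤ) - k') *
      hd.unit ^ ((l : ℤ) - l') := by
  rw [zpow_sub_mul_zpow_sub_mul_zpow_sub_mul_zpow_sub, eq_div_iff_mul_eq', Units.ext_iff,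
    Units.val_mul, IsUnit.val_unit_zpow_natCast_mul, IsUnit.val_unit_zpow_natCast_mul]
  exact hu

theorem MvPolynomial.int_units_eq_one_or {σ : Type*} (v : (MvPolynomial σ ℤ)ˣ) :
    v = 1 ∨ v = -1 := by
  obtain ⟨r, hr, hv⟩ := isUnit_iff_eq_C_of_isReduced.mp v.isUnit
  rcases Int.isUnit_iff.mp hr with rfl | rfl
  · exact Or.inl (Units.ext (by simpa using hv))
  · exact Or.inr (Units.ext (by simpa using hv))

theorem MvPolynomial.prime_X_zero_add_X_one {R : Type*} [CommRing R] [IsDomain R] :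
    Prime (X 0 + X 1 : MvPolynomial (Fin 2) R) := by
  rw [← MulEquiv.prime_iff (finSuccEquiv R 1).toMulEquiv]
  have : finSuccEquiv R 1 (X 0 + X 1) = Polynomial.X - Polynomial.C (-X 0) := by
    rw [show (X 1 : MvPolynomial (Fin 2) R) = X (Fin.succ 0) from rfl, map_add,
      finSuccEquiv_X_zero, finSuccEquiv_X_succ, map_neg, sub_neg_eq_add]
  simpa [this] using Polynomial.prime_X_sub_C (-X 0 : MvPolynomial (Fin 1) R)

theorem prime_of_mem_Mst_generators :
    ∀ p ∈ ({2, X 0, X 1, X 0 + X 1} : Set PolyST), Prime p := by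
  rintro p (rfl | rfl | rfl | rfl)
  · simpa using (prime_C_iff (σ := Fin 2)).mpr Int.prime_two
  · exact X_prime
  · exact X_prime
  · exact prime_X_zero_add_X_one

/-- Every unit of `Λ_J = ℤ[1/2, s^{±1}, t^{±1}, (s+t)^{−1}]` has the form
`±2^i s^j t^k (s+t)^l` with `i, j, k, l ∈ ℤ`. -/
theorem lambdaJ_units
    (h2 : IsUnit (algebraMap PolyST LambdaJ 2))
    (hs : IsUnit (algebraMap PolyST LambdaJ (X 0)))
    (ht : IsUnit (algebraMap PolyST LambdaJ (X 1)))
    (hst : IsUnit (algebraMap PolyST LambdaJ (X 0 + X 1))) :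
    ∀ u : LambdaJˣ, ∃ i j k l : ℤ,
      u = h2.unit ^ i * hs.unit ^ j * ht.unit ^ k * hst.unit ^ l ∨
      u = -(h2.unit ^ i * hs.unit ^ j * ht.unit ^ k * hst.unit ^ l) := by
  intro u
  -- instance search does not unfold the definition `Mst`
  have : IsLocalization (Submonoid.closure ({2, X 0, X 1, X 0 + X 1} : Set PolyST)) LambdaJ :=
    Localization.isLocalization (M := Mst)
  obtain ⟨v, s, hs_mem, m, hm_mem, hu⟩ :=
    IsLocalization.exists_unit_mul_eq_of_closure_primes prime_of_mem_Mst_generators u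
  obtain ⟨i, j, k, l, rfl⟩ := Submonoid.exists_pow_mul_of_mem_closure_four hs_mem
  obtain ⟨i', j', k', l', rfl⟩ := Submonoid.exists_pow_mul_of_mem_closure_four hm_mem
  refine ⟨i - i', j - j', k - k', l - l', ?_⟩
  rcases int_units_eq_one_or v with rfl | rfl
  · exact Or.inl (IsUnit.eq_unit_zpow_sub_mul _ h2 hs ht hst (by simpa using hu))
  · exact Or.inr (neg_eq_iff_eq_neg.mp
      (IsUnit.eq_unit_zpow_sub_mul _ h2 hs ht hst (by simpa [neg_eq_iff_eq_neg] using hu)))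
end
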